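/- arXiv:2202.00213 — 4 statements merged into one kernel-verified Lean document; each statement's English description precedes it below -/
import Mathlib

section
/- Let G be a finite solvable group. Then the maximum number of pairwise nonadjacent vertices in the prime graph of G is at most 2; that is, one cannot find three distinct primes p, q, r dividing |G| such that none of pq, pr, qr is an element order of G. -/
open Subgroup Finset

open Subgroup

section Helpers
variable {G : Type*} [Group G]

lemma exists_orderOf_eq_of_dvd [Finite G] {g : G} {n : ℕ} (hn : n ∣ orderOf g) (h0 : n ≠ 0) :
    ∃ x : G, orderOf x = n :=
  ⟨g ^ (orderOf g / n), orderOf_pow_orderOf_div (orderOf_pos g).ne' hn⟩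

lemma lift_order [Finite G] {M : Subgroup G} [M.Normal] {n : ℕ} (h0 : n ≠ 0)
    (h : ∃ x : G ⧸ M, orderOf x = n) : ∃ g : G, orderOf g = n := by
  obtain ⟨x, hx⟩ := h
  obtain ⟨g, rfl⟩ := QuotientGroup.mk'_surjective M x
  exact exists_orderOf_eq_of_dvd (hx ▸ orderOf_map_dvd (QuotientGroup.mk' M) g) h0

lemma exists_abelian_normal [Group.IsSolvable G] [Nontrivial G] :
    ∃ A : Subgroup G, A.Normal ∧ A ≠ ⊥ ∧ ∀ a ∈ A, ∀ b ∈ A, a * b = b * a := by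
  have hsolv : ∃ n, derivedSeries G n = ⊥ := Group.IsSolvable.solvable (G := G)
  classical
  let m := Nat.find hsolv
  have hm : derivedSeries G m = ⊥ := Nat.find_spec hsolv
  have hm0 : m ≠ 0 := by
    intro h
    obtain ⟨x, hx⟩ := exists_ne (1 : G)
    have : x ∈ derivedSeries G m := h ▸ mem_top x
    rw [hm, Subgroup.mem_bot] at this
    exact hx this
  obtain ⟨k, hk⟩ : ∃ k, m = k + 1 := ⟨m - 1, (Nat.succ_pred_eq_of_ne_zero hm0).symm⟩
  refine ⟨derivedSeries G k, derivedSeries_normal G k, Nat.find_min hsolv (show k < m by omega), ?_⟩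
  have hcomm : ⁅derivedSeries G k, derivedSeries G k⁆ = ⊥ := by
    rw [← derivedSeries_succ, ← hk]; exact hm
  rw [Subgroup.commutator_eq_bot_iff_le_centralizer] at hcomm
  intro a ha b hb
  exact (Subgroup.mem_centralizer_iff.mp (hcomm ha) b hb).symm

lemma exists_elementary_normal [Finite G] [Group.IsSolvable G] [Nontrivial G] :
    ∃ (t : ℕ) (N : Subgroup G), t.Prime ∧ N.Normal ∧ N ≠ ⊥ ∧
      (∀ a ∈ N, ∀ b ∈ N, a * b = b * a) ∧ ∀ n ∈ N, n ^ t = 1 := by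
  obtain ⟨A, hAn, hAb, hAc⟩ := exists_abelian_normal (G := G)
  obtain ⟨⟨a, haA⟩, ha1⟩ := Subgroup.ne_bot_iff_exists_ne_one.mp hAb
  simp only [ne_eq, Submonoid.mk_eq_one] at ha1
  have hoa : orderOf a ≠ 1 := by simpa using ha1
  set t := (orderOf a).minFac with ht
  have htp : t.Prime := Nat.minFac_prime hoa
  refine ⟨t, {
    carrier := {g | g ∈ A ∧ g ^ t = 1}
    one_mem' := ⟨A.one_mem, one_pow t⟩
    mul_mem' := by
      rintro x y ⟨hxA, hx⟩ ⟨hyA, hy⟩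
      refine ⟨A.mul_mem hxA hyA, ?_⟩
      have hc : Commute x y := hAc x hxA y hyA
      rw [hc.mul_pow, hx, hy, mul_one]
    inv_mem' := by
      rintro x ⟨hxA, hx⟩
      exact ⟨A.inv_mem hxA, by rw [inv_pow, hx, inv_one]⟩ }, htp, ?_, ?_, ?_, ?_⟩
  · constructor
    rintro n ⟨hnA, hn⟩ g
    refine ⟨hAn.conj_mem n hnA g, ?_⟩
    have := map_pow (MulAut.conj g).toMonoidHom n t
    simp only [MulEquiv.coe_toMonoidHom, MulAut.conj_apply] at this
    rw [← this, hn, mul_one, mul_inv_cancel]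
  · rw [Subgroup.ne_bot_iff_exists_ne_one]
    refine ⟨⟨a ^ (orderOf a / t), A.pow_mem haA _, ?_⟩, ?_⟩
    · rw [← pow_mul, Nat.div_mul_cancel (Nat.minFac_dvd _), pow_orderOf_eq_one]
    · have : orderOf (a ^ (orderOf a / t)) = t :=
        orderOf_pow_orderOf_div (orderOf_pos a).ne' (Nat.minFac_dvd _)
      intro h
      have h' : a ^ (orderOf a / t) = 1 := congrArg Subtype.val h
      rw [h', orderOf_one] at this
      exact htp.one_lt.ne' this.symm
  · intro x hx y hy; exact hAc x hx.1 y hy.1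
  · intro n hn; exact hn.2

lemma prime_eq_of_exponent {K : Type*} [Group K] [Finite K] {t s : ℕ} (ht : t.Prime)
    (h : ∀ k : K, k ^ t = 1) (hs : s.Prime) (hd : s ∣ Nat.card K) : s = t := by
  haveI : Fact s.Prime := ⟨hs⟩
  obtain ⟨x, hx⟩ := exists_prime_orderOf_dvd_card' s hd
  have hdvd : s ∣ t := hx ▸ orderOf_dvd_of_pow_eq_one (h x)
  exact ((Nat.prime_dvd_prime_iff_eq hs ht).mp hdvd)
end Helpers


section Engine
variable {K V : Type*} [Group K] [CommGroup V]

lemma prod_pow_eq_one (α : MulAut V) {m : ℕ} (hm : α ^ m = 1)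
    (hfpf : ∀ v : V, α v = v → v = 1) (v : V) :
    ∏ j ∈ Finset.range m, (α ^ j) v = 1 := by
  set P := ∏ j ∈ Finset.range m, (α ^ j) v with hP
  refine hfpf P ?_
  have h1 : α P = ∏ j ∈ Finset.range m, (α ^ (j + 1)) v := by
    rw [hP, map_prod]
    refine Finset.prod_congr rfl fun j _ => ?_
    rw [pow_succ']
    rfl
  cases m with
  | zero => simp [hP]
  | succ m' =>
    rw [h1, Finset.prod_range_succ, hm, hP, Finset.prod_range_succ']
    simp

lemma engine [Fintype K] [Nontrivial V] {p q r : ℕ} (hp : p.Prime) (hq : q.Prime)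
    (hr : r.Prime) (hpq : p ≠ q)
    (φ : K →* MulAut V)
    (N : Subgroup K) [hNn : N.Normal] (hNe : N ≠ ⊥) (hNq : ∀ n ∈ N, n ^ q = 1)
    (y : K) (hy : orderOf y = r)
    (hfq : ∀ k : K, orderOf k = q → ∀ v : V, φ k v = v → v = 1)
    (hfr : ∀ k : K, orderOf k = r → ∀ v : V, φ k v = v → v = 1)
    (hyN : ∀ n ∈ N, y * n * y⁻¹ = n → n = 1)
    (hVp : ∀ v : V, v ^ p = 1) : False := by
  classical
  haveI := Fact.mk hp
  haveI := Fact.mk hq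
  haveI := Fact.mk hr
  obtain ⟨⟨a, haN⟩, ha1'⟩ := Subgroup.ne_bot_iff_exists_ne_one.mp hNe
  have ha1 : a ≠ 1 := fun h => ha1' (Subtype.ext h)
  have hoa : orderOf a = q := orderOf_eq_prime (hNq a haN) ha1
  -- the sum over N kills everything
  have hS : ∀ w : V, ∏ n : N, φ (↑n) w = 1 := by
    intro w
    refine hfq a hoa _ ?_
    rw [map_prod]
    have he : ∀ n : N, φ a ((φ ↑n) w) = φ ((↑(⟨a, haN⟩ * n : N) : K)) w := by
      intro n
      rw [← MulAut.mul_apply, ← map_mul]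
      rfl
    rw [Finset.prod_congr rfl fun n _ => he n]
    exact (Fintype.prod_equiv (Equiv.mulLeft (⟨a, haN⟩ : N)) _ _ fun n => rfl)
  -- fpf of y^j-conjugation on N for 0 < j < r
  have hyjN : ∀ j, 0 < j → j < r → ∀ n ∈ N, y ^ j * n * (y ^ j)⁻¹ = n → n = 1 := by
    intro j hj0 hjr n hn hfix
    have hjr' : Nat.Coprime j r := (Nat.coprime_comm.mp (hr.coprime_iff_not_dvd.mpr
      (fun h => Nat.not_dvd_of_pos_of_lt hj0 hjr h)))
    obtain ⟨k, -, hk⟩ := Nat.exists_mul_mod_eq_one_of_coprime hjr' hr.one_lt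
    refine hyN n hn ?_
    have hcom : Commute (y ^ j) n := mul_inv_eq_iff_eq_mul.mp hfix
    have hcom2 : Commute (y ^ (j * k)) n := by
      rw [pow_mul]
      exact hcom.pow_left k
    have : y ^ (j * k) = y := by
      rw [← pow_mod_orderOf, hy, hk, pow_one]
    rw [this] at hcom2
    rw [hcom2.eq, mul_inv_cancel_right]
  -- the double product, way 1 : it is 1
  have hT1 : ∀ v : V, ∏ n : N, ∏ j ∈ Finset.range r, (φ ((↑n)⁻¹ * y * ↑n) ^ j) v = 1 := by
    intro v
    refine Finset.prod_eq_one fun n _ => ?_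
    set z := (↑n : K)⁻¹ * y * ↑n with hz
    have hoz : orderOf z = r := by
      rw [hz]
      have := orderOf_injective (MulAut.conj ((↑n : K)⁻¹)).toMonoidHom
        (MulEquiv.injective _) y
      simpa [MulAut.conj_apply, mul_assoc] using this.trans hy
    refine prod_pow_eq_one (φ z) ?_ (hfr z hoz) v
    rw [← map_pow, ← hoz, pow_orderOf_eq_one, map_one]
  -- way 2 : it is v ^ card N
  have hT2 : ∀ v : V, ∏ n : N, ∏ j ∈ Finset.range r, (φ ((↑n)⁻¹ * y * ↑n) ^ j) v
      = v ^ Fintype.card N := by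
    intro v
    have hrw : ∀ (n : N) (j : ℕ), (φ ((↑n : K)⁻¹ * y * ↑n) ^ j) v = φ ((↑n : K)⁻¹ * y ^ j * ↑n) v := by
      intro n j
      have harg : ((↑n : K)⁻¹ * y * ↑n) ^ j = (↑n : K)⁻¹ * y ^ j * ↑n := by
        have := map_pow (MulAut.conj ((↑n : K)⁻¹)).toMonoidHom y j
        simpa [MulAut.conj_apply] using this.symm
      rw [← map_pow, harg]
    rw [Finset.prod_congr rfl fun n _ => Finset.prod_congr rfl fun j _ => hrw n j]
    rw [Finset.prod_comm]
    -- now ∏ j ∈ range r, ∏ n : N, φ (n⁻¹ y^j n) v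
    cases' Nat.exists_eq_add_of_lt hr.pos with r' hr'
    rw [zero_add] at hr'
    subst hr'
    rw [Finset.prod_range_succ']
    have hU0 : ∏ n : N, φ ((↑n : K)⁻¹ * y ^ 0 * ↑n) v = v ^ Fintype.card N := by
      have : ∀ n : N, φ ((↑n : K)⁻¹ * y ^ 0 * ↑n) v = v := by
        intro n
        simp
      rw [Finset.prod_congr rfl fun n _ => this n, Finset.prod_const, Finset.card_univ]
    rw [hU0]
    have hUj : ∀ j ∈ Finset.range r', ∏ n : N, φ ((↑n : K)⁻¹ * y ^ (j + 1) * ↑n) v = 1 := by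
      intro j hj
      have hj1 : 0 < j + 1 := Nat.succ_pos j
      have hjr : j + 1 < r' + 1 := Nat.succ_lt_succ (Finset.mem_range.mp hj)
      -- ψ : N → N
      have hmem : ∀ n : N, (↑n : K)⁻¹ * (y ^ (j+1) * ↑n * (y ^ (j+1))⁻¹) ∈ N :=
        fun n => N.mul_mem (N.inv_mem n.2) (hNn.conj_mem _ n.2 _)
      set ψ : N → N := fun n => ⟨_, hmem n⟩ with hψ
      have hinj : Function.Injective ψ := by
        intro n m hnm
        have h' : (↑n : K)⁻¹ * (y ^ (j+1) * ↑n * (y ^ (j+1))⁻¹)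
            = (↑m : K)⁻¹ * (y ^ (j+1) * ↑m * (y ^ (j+1))⁻¹) := congrArg Subtype.val hnm
        set Y := y ^ (j+1) with hY
        set A := (↑n : K) with hA
        set B := (↑m : K) with hB
        have key : Y * (A * B⁻¹) * Y⁻¹ = A * B⁻¹ := by
          have e2 : A⁻¹ * Y * A = B⁻¹ * Y * B := by
            calc A⁻¹ * Y * A = A⁻¹ * (Y * A * Y⁻¹) * Y := by group
              _ = B⁻¹ * (Y * B * Y⁻¹) * Y := by rw [h']
              _ = B⁻¹ * Y * B := by group
          have h2 : Y * A * B⁻¹ = A * B⁻¹ * Y := by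
            calc Y * A * B⁻¹ = A * (A⁻¹ * Y * A) * B⁻¹ := by group
              _ = A * (B⁻¹ * Y * B) * B⁻¹ := by rw [e2]
              _ = A * B⁻¹ * Y := by group
          calc Y * (A * B⁻¹) * Y⁻¹ = (Y * A * B⁻¹) * Y⁻¹ := by group
            _ = (A * B⁻¹ * Y) * Y⁻¹ := by rw [h2]
            _ = A * B⁻¹ := by group
        have h3 := hyjN (j+1) hj1 hjr (A * B⁻¹) (N.mul_mem n.2 (N.inv_mem m.2)) key
        exact Subtype.ext (mul_inv_eq_one.mp h3)
      have hbij : Function.Bijective ψ := Finite.injective_iff_bijective.mp hinj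
      have hsplit : ∀ n : N, φ ((↑n : K)⁻¹ * y ^ (j+1) * ↑n) v
          = φ (↑(ψ n)) (φ (y ^ (j+1)) v) := by
        intro n
        rw [← MulAut.mul_apply, ← map_mul]
        congr 1
        rw [hψ]
        simp only []
        group
      rw [Finset.prod_congr rfl fun n _ => hsplit n]
      rw [Fintype.prod_bijective ψ hbij _ (fun n : N => φ (↑n) (φ (y ^ (j+1)) v)) (fun n => rfl)]
      exact hS _
    rw [Finset.prod_congr rfl hUj, Finset.prod_const_one, one_mul]
  -- conclude
  have hcard : ∀ v : V, v ^ Fintype.card N = 1 := fun v => (hT2 v).symm.trans (hT1 v)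
  have hNq' : ∀ s : ℕ, s.Prime → s ∣ Nat.card N → s = q := by
    intro s hs hd
    exact prime_eq_of_exponent hq (fun k : N => Subtype.ext (by
      have := hNq ↑k k.2
      simpa using this)) hs hd
  obtain ⟨v, hv1⟩ := exists_ne (1 : V)
  have h1 : orderOf v ∣ p := orderOf_dvd_of_pow_eq_one (hVp v)
  have h2 : orderOf v ∣ Fintype.card N := orderOf_dvd_of_pow_eq_one (hcard v)
  rcases (Nat.dvd_prime hp).mp h1 with h | h
  · exact hv1 (orderOf_eq_one_iff.mp h)
  · have hpd : p ∣ Nat.card N := by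
      rw [Nat.card_eq_fintype_card]
      exact h ▸ h2
    exact hpq (hNq' p hp hpd)
end Engine

section ClaimD
variable {K V : Type*} [Group K] [CommGroup V]

lemma claimD_aux [Fintype K] [Nontrivial V] {p q r : ℕ} (hp : p.Prime) (hq : q.Prime)
    (hr : r.Prime) (hpq : p ≠ q) (hqr : q ≠ r)
    (φ : K →* MulAut V) (hVp : ∀ v : V, v ^ p = 1)
    (hrK : r ∣ Nat.card K)
    (hfq : ∀ k : K, orderOf k = q → ∀ v : V, φ k v = v → v = 1)
    (hfr : ∀ k : K, orderOf k = r → ∀ v : V, φ k v = v → v = 1)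
    (N : Subgroup K) [hNn : N.Normal] (hNe : N ≠ ⊥) (hNq : ∀ n ∈ N, n ^ q = 1) :
    ∃ k : K, orderOf k = q * r := by
  haveI := Fact.mk hr
  haveI := Fact.mk hq
  obtain ⟨y, hy⟩ := exists_prime_orderOf_dvd_card' r hrK
  by_cases hex : ∃ n ∈ N, n ≠ 1 ∧ y * n * y⁻¹ = n
  · obtain ⟨n, hn, hn1, hcomm⟩ := hex
    have hc : Commute n y := (mul_inv_eq_iff_eq_mul.mp hcomm).symm
    have hon : orderOf n = q := orderOf_eq_prime (hNq n hn) hn1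
    refine ⟨n * y, ?_⟩
    rw [hc.orderOf_mul_eq_mul_orderOf_of_coprime ?_, hon, hy]
    rw [hon, hy]
    exact (Nat.coprime_primes hq hr).mpr hqr
  · push_neg at hex
    exact absurd (engine hp hq hr hpq φ N hNe hNq y hy hfq hfr
      (fun n hn hfix => by
        by_contra h1
        exact hex n hn h1 hfix) hVp) (fun h => h)

lemma claimD [Fintype K] [Group.IsSolvable K] [Nontrivial V] {p q r : ℕ} (hp : p.Prime)
    (hq : q.Prime) (hr : r.Prime) (hpq : p ≠ q) (hpr : p ≠ r) (hqr : q ≠ r)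
    (φ : K →* MulAut V) (hVp : ∀ v : V, v ^ p = 1)
    (hqK : q ∣ Nat.card K) (hrK : r ∣ Nat.card K)
    (hfq : ∀ k : K, orderOf k = q → ∀ v : V, φ k v = v → v = 1)
    (hfr : ∀ k : K, orderOf k = r → ∀ v : V, φ k v = v → v = 1)
    (hdiv : ∀ s : ℕ, s.Prime → s ∣ Nat.card K → s = q ∨ s = r) :
    ∃ k : K, orderOf k = q * r := by
  haveI := Fact.mk hq
  haveI : Nontrivial K := by
    have h1 : 1 < Nat.card K := lt_of_lt_of_le hq.one_lt (Nat.le_of_dvd Nat.card_pos hqK)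
    rw [Nat.card_eq_fintype_card] at h1
    exact Fintype.one_lt_card_iff_nontrivial.mp h1
  obtain ⟨t, N, htp, hNn, hNe, _, hNt⟩ := exists_elementary_normal (G := K)
  haveI := Fact.mk htp
  have htK : t ∣ Nat.card K := by
    obtain ⟨⟨n, hn⟩, hn1'⟩ := Subgroup.ne_bot_iff_exists_ne_one.mp hNe
    have hn1 : n ≠ 1 := fun h => hn1' (Subtype.ext h)
    have : orderOf n = t := orderOf_eq_prime (hNt n hn) hn1
    exact this ▸ orderOf_dvd_natCard n
  haveI := hNn
  rcases hdiv t htp htK with rfl | rfl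
  · exact claimD_aux hp hq hr hpq hqr φ hVp hrK hfq hfr N hNe hNt
  · obtain ⟨k, hk⟩ := claimD_aux hp hr hq hpr (Ne.symm hqr) φ hVp hqK hfr hfq N hNe hNt
    exact ⟨k, by rw [hk, mul_comm]⟩
end ClaimD


lemma hall_qr {q r : ℕ} (hq : q.Prime) (hr : r.Prime) :
    ∀ (n : ℕ) (K : Type*) [Group K] [Fintype K] [Group.IsSolvable K], Nat.card K ≤ n →
    ∃ H : Subgroup K, (∀ s : ℕ, s.Prime → s ∣ Nat.card H → s = q ∨ s = r) ∧
      ¬ q ∣ H.index ∧ ¬ r ∣ H.index := by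
  intro n
  induction n with
  | zero => intro K _ _ _ hcard; exact absurd (lt_of_lt_of_le Nat.card_pos hcard) (lt_irrefl 0)
  | succ n IH =>
    intro K _ _ _ hcard
    rcases subsingleton_or_nontrivial K with hK | hK
    · have hcard1 : Nat.card K = 1 := Nat.card_eq_one_iff_unique.mpr ⟨hK, inferInstance⟩
      refine ⟨⊥, ?_, ?_, ?_⟩
      · intro s hs hd
        rw [Subgroup.card_bot] at hd
        exact absurd (Nat.eq_one_of_dvd_one hd) hs.one_lt.ne'
      · rw [Subgroup.index_bot, hcard1]
        exact fun h => hq.one_lt.ne' (Nat.eq_one_of_dvd_one h)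
      · rw [Subgroup.index_bot, hcard1]
        exact fun h => hr.one_lt.ne' (Nat.eq_one_of_dvd_one h)
    · obtain ⟨t, N, htp, hNn, hNe, hNab, hNt⟩ := exists_elementary_normal (G := K)
      haveI := hNn
      haveI : Nontrivial N := (Subgroup.nontrivial_iff_ne_bot N).mpr hNe
      have hcardK : Nat.card K = Nat.card (K ⧸ N) * Nat.card N :=
        Subgroup.card_eq_card_quotient_mul_card_subgroup N
      have hN2 : 2 ≤ Nat.card N := (Subgroup.one_lt_card_iff_ne_bot N).mpr hNe
      have hNpos : 0 < Nat.card N := by omega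
      have hQpos : 0 < Nat.card (K ⧸ N) := Nat.card_pos
      have hQlt : Nat.card (K ⧸ N) ≤ n := by
        have : Nat.card (K ⧸ N) * 2 ≤ Nat.card K := by
          calc Nat.card (K ⧸ N) * 2 ≤ Nat.card (K ⧸ N) * Nat.card N :=
                Nat.mul_le_mul_left _ hN2
            _ = Nat.card K := hcardK.symm
        omega
      haveI : Fintype (K ⧸ N) := Fintype.ofFinite _
      obtain ⟨Hb, hHb, hHbq, hHbr⟩ := IH (K ⧸ N) hQlt
      set π := QuotientGroup.mk' N with hπ
      set H₁ := Subgroup.comap π Hb with hH₁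
      have hNle : N ≤ H₁ := by
        intro x hx
        rw [hH₁, Subgroup.mem_comap]
        have : π x = 1 := (QuotientGroup.eq_one_iff x).mpr hx
        rw [this]
        exact Hb.one_mem
      have hidx : H₁.index = Hb.index :=
        Subgroup.index_comap_of_surjective Hb (QuotientGroup.mk'_surjective N)
      have hidxne : Hb.index ≠ 0 := Subgroup.index_ne_zero_of_finite
      have hcard₁ : Nat.card H₁ = Nat.card Hb * Nat.card N := by
        have e1 : Nat.card H₁ * H₁.index = Nat.card K := Subgroup.card_mul_index H₁
        have e2 : Nat.card Hb * Hb.index = Nat.card (K ⧸ N) := Subgroup.card_mul_index Hb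
        rw [hidx] at e1
        apply Nat.eq_of_mul_eq_mul_right (Nat.pos_of_ne_zero hidxne)
        rw [e1, hcardK, ← e2]
        ring
      have hNdiv : ∀ s : ℕ, s.Prime → s ∣ Nat.card N → s = t := by
        intro s hs hd
        refine prime_eq_of_exponent htp (fun k : N => ?_) hs hd
        have := hNt ↑k k.2
        exact Subtype.ext (by simpa using this)
      by_cases htqr : t = q ∨ t = r
      · refine ⟨H₁, ?_, ?_, ?_⟩
        · intro s hs hd
          rw [hcard₁] at hd
          rcases hs.dvd_mul.mp hd with h | h
          · exact hHb s hs h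
          · rw [hNdiv s hs h]; exact htqr
        · rw [hidx]; exact hHbq
        · rw [hidx]; exact hHbr
      · push_neg at htqr
        -- Schur-Zassenhaus inside H₁
        set N' := N.subgroupOf H₁ with hN'
        have hcardN' : Nat.card N' = Nat.card N :=
          Nat.card_congr (Subgroup.subgroupOfEquivOfLe hNle).toEquiv
        have hidxN' : N'.index = Nat.card Hb := by
          have e1 : Nat.card N' * N'.index = Nat.card H₁ := Subgroup.card_mul_index N'
          rw [hcardN', hcard₁, mul_comm (Nat.card Hb) (Nat.card N)] at e1
          exact Nat.eq_of_mul_eq_mul_left hNpos e1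
        have hcop : Nat.Coprime (Nat.card N') N'.index := by
          rw [Nat.coprime_comm]
          by_contra hco
          have hgcd : Nat.gcd N'.index (Nat.card N') ≠ 1 := hco
          obtain ⟨s, hs, hsd⟩ := Nat.exists_prime_and_dvd hgcd
          have h1 : s ∣ N'.index := hsd.trans (Nat.gcd_dvd_left _ _)
          have h2 : s ∣ Nat.card N' := hsd.trans (Nat.gcd_dvd_right _ _)
          rw [hcardN'] at h2
          rw [hidxN'] at h1
          have := hNdiv s hs h2
          rcases hHb s hs h1 with h | h
          · exact htqr.1 (this ▸ h)
          · exact htqr.2 (this ▸ h)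
        obtain ⟨C, hC⟩ := Subgroup.exists_right_complement'_of_coprime hcop
        have hcardC : Nat.card C = Nat.card Hb := by
          have := hC.card_mul
          rw [hcardN'] at this
          apply Nat.eq_of_mul_eq_mul_left hNpos
          rw [this, hcard₁, mul_comm]
        have hcardmap : Nat.card (C.map H₁.subtype) = Nat.card Hb := by
          rw [← hcardC]
          exact (Nat.card_congr (Subgroup.equivMapOfInjective C H₁.subtype
            (Subgroup.subtype_injective H₁)).toEquiv).symm
        have hHbpos : 0 < Nat.card Hb := Nat.card_pos
        have hidxmap : (C.map H₁.subtype).index = Hb.index * Nat.card N := by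
          have e1 : Nat.card (C.map H₁.subtype) * (C.map H₁.subtype).index = Nat.card K :=
            Subgroup.card_mul_index _
          have e2 : Nat.card Hb * Hb.index = Nat.card (K ⧸ N) := Subgroup.card_mul_index Hb
          rw [hcardmap, hcardK, ← e2] at e1
          apply Nat.eq_of_mul_eq_mul_left hHbpos
          rw [e1]
          ring
        refine ⟨C.map H₁.subtype, ?_, ?_, ?_⟩
        · intro s hs hd
          rw [hcardmap] at hd
          exact hHb s hs hd
        · rw [hidxmap]
          intro h
          rcases hq.dvd_mul.mp h with h | h
          · exact hHbq h
          · exact htqr.1 (hNdiv q hq h).symm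
        · rw [hidxmap]
          intro h
          rcases hr.dvd_mul.mp h with h | h
          · exact hHbr h
          · exact htqr.2 (hNdiv r hr h).symm


lemma hard_case {G : Type*} [Group G] [Fintype G] [Group.IsSolvable G] {p q r : ℕ}
    (hp : p.Prime) (hq : q.Prime) (hr : r.Prime)
    (hpq : p ≠ q) (hpr : p ≠ r) (hqr : q ≠ r)
    (hqG : q ∣ Nat.card G) (hrG : r ∣ Nat.card G)
    (M : Subgroup G) [hMn : M.Normal] (hMe : M ≠ ⊥)
    (hMab : ∀ a ∈ M, ∀ b ∈ M, a * b = b * a)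
    (hMp : ∀ m ∈ M, m ^ p = 1)
    (hnpq : ¬ ∃ x : G, orderOf x = p * q) (hnpr : ¬ ∃ x : G, orderOf x = p * r) :
    ∃ x : G, orderOf x = q * r := by
  classical
  haveI := Fact.mk hp
  haveI := Fact.mk hq
  haveI := Fact.mk hr
  letI : CommGroup ↥M :=
    { (inferInstance : Group ↥M) with
      mul_comm := fun a b => Subtype.ext (hMab ↑a a.2 ↑b b.2) }
  haveI : Nontrivial ↥M := (Subgroup.nontrivial_iff_ne_bot M).mpr hMe
  have hVp : ∀ v : ↥M, v ^ p = 1 := fun v => Subtype.ext (by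
    have := hMp ↑v v.2
    simpa using this)
  -- the action of G ⧸ M on M
  have hker : ∀ x ∈ M, MulAut.conjNormal (H := M) x = 1 := by
    intro x hx
    ext v
    simp only [MulAut.conjNormal_apply, MulAut.one_apply]
    rw [hMab x hx ↑v v.2, mul_inv_cancel_right]
  let φ : G ⧸ M →* MulAut ↥M := QuotientGroup.lift M MulAut.conjNormal hker
  have hφ : ∀ g : G, φ (QuotientGroup.mk g) = MulAut.conjNormal g := fun g => rfl
  haveI : Fintype (G ⧸ M) := Fintype.ofFinite _
  -- card divisibilities
  have hMdiv : ∀ s : ℕ, s.Prime → s ∣ Nat.card M → s = p := by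
    intro s hs hd
    refine prime_eq_of_exponent hp (fun k : M => hVp k) hs hd
  have hcardG : Nat.card G = Nat.card (G ⧸ M) * Nat.card M :=
    Subgroup.card_eq_card_quotient_mul_card_subgroup M
  have hqQ : q ∣ Nat.card (G ⧸ M) := by
    rcases (hq.dvd_mul.mp (hcardG ▸ hqG)) with h | h
    · exact h
    · exact absurd (hMdiv q hq h) hpq.symm
  have hrQ : r ∣ Nat.card (G ⧸ M) := by
    rcases (hr.dvd_mul.mp (hcardG ▸ hrG)) with h | h
    · exact h
    · exact absurd (hMdiv r hr h) hpr.symm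
  -- Hall {q,r}-subgroup of G ⧸ M
  obtain ⟨H, hHdiv, hHq, hHr⟩ := hall_qr hq hr (Nat.card (G ⧸ M)) (G ⧸ M) le_rfl
  have hidxcard : Nat.card H * H.index = Nat.card (G ⧸ M) := Subgroup.card_mul_index H
  have hqH : q ∣ Nat.card H := by
    rcases (hq.dvd_mul.mp (hidxcard ▸ hqQ)) with h | h
    · exact h
    · exact absurd h hHq
  have hrH : r ∣ Nat.card H := by
    rcases (hr.dvd_mul.mp (hidxcard ▸ hrQ)) with h | h
    · exact h
    · exact absurd h hHr
  -- fixed point freeness transferred from G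
  have hfpf : ∀ s : ℕ, s.Prime → s ≠ p → (¬ ∃ x : G, orderOf x = p * s) →
      ∀ k : G ⧸ M, orderOf k = s → ∀ v : ↥M, φ k v = v → v = 1 := by
    intro s hs hsp hnps k hk v hv
    obtain ⟨g, rfl⟩ := QuotientGroup.mk'_surjective M k
    have hdvd1 : s ∣ orderOf g := hk ▸ orderOf_map_dvd (QuotientGroup.mk' M) g
    have hgq : g ^ s ∈ M := by
      rw [← QuotientGroup.eq_one_iff]
      have : (QuotientGroup.mk g : G ⧸ M) ^ s = 1 := by
        rw [← hk]
        exact pow_orderOf_eq_one _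
      simpa using this
    have hdvd2 : orderOf g ∣ s * p := by
      apply orderOf_dvd_of_pow_eq_one
      rw [pow_mul]
      exact hMp _ hgq
    have hog : orderOf g = s := by
      obtain ⟨c, hc⟩ := hdvd1
      have hcd : c ∣ p := by
        have h2 : s * c ∣ s * p := hc ▸ hdvd2
        exact (Nat.mul_dvd_mul_iff_left hs.pos).mp h2
      rcases (Nat.dvd_prime hp).mp hcd with h1 | h1
      · rw [hc, h1, mul_one]
      · exfalso
        exact hnps ⟨g, by rw [hc, h1, mul_comm]⟩
    -- v is fixed : if v ≠ 1 we get an element of order p * s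
    by_contra hv1
    have hvM : (↑v : G) ≠ 1 := fun h => hv1 (Subtype.ext h)
    have hov : orderOf (↑v : G) = p := orderOf_eq_prime (hMp ↑v v.2) hvM
    have hfix : g * ↑v * g⁻¹ = ↑v := by
      have h2 : ((MulAut.conjNormal g) v : G) = ↑v := congrArg Subtype.val hv
      rwa [MulAut.conjNormal_apply] at h2
    have hcom : Commute (↑v : G) g := (mul_inv_eq_iff_eq_mul.mp hfix).symm
    refine hnps ⟨(↑v : G) * g, ?_⟩
    rw [hcom.orderOf_mul_eq_mul_orderOf_of_coprime, hov, hog]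
    rw [hov, hog]
    exact (Nat.coprime_primes hp hs).mpr (fun h => hsp h.symm)
  -- apply the main claim to the Hall subgroup
  haveI : Group.IsSolvable (G ⧸ M) := inferInstance
  haveI : Fintype ↥H := Fintype.ofFinite _
  obtain ⟨k, hk⟩ := claimD (K := ↥H) (V := ↥M) hp hq hr hpq hpr hqr
    (φ.comp H.subtype) hVp hqH hrH
    (fun k hk v hv => hfpf q hq (Ne.symm hpq) hnpq ↑k (by rwa [Subgroup.orderOf_coe]) v hv)
    (fun k hk v hv => hfpf r hr (Ne.symm hpr) hnpr ↑k (by rwa [Subgroup.orderOf_coe]) v hv)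
    hHdiv
  refine lift_order (M := M) (Nat.mul_ne_zero hq.pos.ne' hr.pos.ne') ⟨↑k, ?_⟩
  rwa [Subgroup.orderOf_coe]


lemma order_swap {G : Type*} [Group G] {a b : ℕ} (h : ¬ ∃ x : G, orderOf x = a * b) :
    ¬ ∃ x : G, orderOf x = b * a := by rwa [mul_comm]

lemma main_aux : ∀ (n : ℕ) (G : Type*) [Group G] [Fintype G] [Group.IsSolvable G],
    Nat.card G ≤ n →
    ∀ p q r : ℕ, p.Prime → q.Prime → r.Prime → p ≠ q → p ≠ r → q ≠ r →
    p ∣ Nat.card G → q ∣ Nat.card G → r ∣ Nat.card G →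
    (¬ ∃ x : G, orderOf x = p * q) → (¬ ∃ x : G, orderOf x = p * r) →
    (¬ ∃ x : G, orderOf x = q * r) → False := by
  intro n
  induction n with
  | zero => intro G _ _ _ hcard; exact fun _ _ _ _ _ _ _ _ _ _ _ _ _ _ =>
      absurd (lt_of_lt_of_le Nat.card_pos hcard) (lt_irrefl 0)
  | succ n IH =>
    intro G _ _ _ hcard p q r hp hq hr hpq hpr hqr hpG hqG hrG hnpq hnpr hnqr
    haveI : Nontrivial G := by
      have h2 : 2 ≤ Nat.card G := le_trans hp.two_le (Nat.le_of_dvd Nat.card_pos hpG)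
      rw [Nat.card_eq_fintype_card] at h2
      exact Fintype.one_lt_card_iff_nontrivial.mp h2
    obtain ⟨t, M, htp, hMn, hMe, hMab, hMt⟩ := exists_elementary_normal (G := G)
    haveI := hMn
    have hMdiv : ∀ s : ℕ, s.Prime → s ∣ Nat.card M → s = t := fun s hs hd =>
      prime_eq_of_exponent htp (fun k : M => Subtype.ext (by simpa using hMt ↑k k.2)) hs hd
    by_cases htp' : t = p
    · subst htp'
      exact hnqr (hard_case htp hq hr hpq hpr hqr hqG hrG M hMe hMab hMt hnpq hnpr)
    · by_cases htq : t = q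
      · subst htq
        exact hnpr (hard_case htp hp hr (Ne.symm hpq) hqr hpr hpG hrG M hMe hMab hMt
          (order_swap hnpq) hnqr)
      · by_cases htr : t = r
        · subst htr
          exact hnpq (hard_case htp hp hq (Ne.symm hpr) (Ne.symm hqr) hpq hpG hqG M hMe hMab hMt
            (order_swap hnpr) (order_swap hnqr))
        · -- recurse to the quotient
          haveI : Nontrivial M := (Subgroup.nontrivial_iff_ne_bot M).mpr hMe
          haveI : Fintype (G ⧸ M) := Fintype.ofFinite _
          have hcardG : Nat.card G = Nat.card (G ⧸ M) * Nat.card M :=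
            Subgroup.card_eq_card_quotient_mul_card_subgroup M
          have hM2 : 2 ≤ Nat.card M := (Subgroup.one_lt_card_iff_ne_bot M).mpr hMe
          have hQle : Nat.card (G ⧸ M) ≤ n := by
            have : Nat.card (G ⧸ M) * 2 ≤ Nat.card G := by
              calc Nat.card (G ⧸ M) * 2 ≤ Nat.card (G ⧸ M) * Nat.card M :=
                    Nat.mul_le_mul_left _ hM2
                _ = Nat.card G := hcardG.symm
            have hQpos : 0 < Nat.card (G ⧸ M) := Nat.card_pos
            omega
          have hdivQ : ∀ s : ℕ, s.Prime → s ≠ t → s ∣ Nat.card G → s ∣ Nat.card (G ⧸ M) := by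
            intro s hs hst hd
            rcases hs.dvd_mul.mp (hcardG ▸ hd) with h | h
            · exact h
            · exact absurd (hMdiv s hs h) hst
          refine IH (G ⧸ M) hQle p q r hp hq hr hpq hpr hqr
            (hdivQ p hp (fun h => htp' h.symm) hpG)
            (hdivQ q hq (fun h => htq h.symm) hqG)
            (hdivQ r hr (fun h => htr h.symm) hrG)
            (fun h => hnpq (lift_order (Nat.mul_ne_zero hp.pos.ne' hq.pos.ne') h))
            (fun h => hnpr (lift_order (Nat.mul_ne_zero hp.pos.ne' hr.pos.ne') h))
            (fun h => hnqr (lift_order (Nat.mul_ne_zero hq.pos.ne' hr.pos.ne') h))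

/-- In a finite solvable group, the prime graph has no coclique of size 3:
one cannot find three distinct primes dividing `|G|` such that none of the three
pairwise products is an element order of `G`. -/
theorem stmt_2 (G : Type*) [Group G] [Fintype G] (hsolv : IsSolvable G) :
    ¬ ∃ p q r : ℕ, p.Prime ∧ q.Prime ∧ r.Prime ∧ p ≠ q ∧ p ≠ r ∧ q ≠ r ∧
      p ∣ Fintype.card G ∧ q ∣ Fintype.card G ∧ r ∣ Fintype.card G ∧
      (¬ ∃ x : G, orderOf x = p * q) ∧ (¬ ∃ x : G, orderOf x = p * r) ∧
      (¬ ∃ x : G, orderOf x = q * r) := by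
  rintro ⟨p, q, r, hp, hq, hr, hpq, hpr, hqr, hpd, hqd, hrd, h1, h2, h3⟩
  haveI : Group.IsSolvable G := hsolv
  rw [← Nat.card_eq_fintype_card] at hpd hqd hrd
  exact main_aux (Nat.card G) G le_rfl p q r hp hq hr hpq hpr hqr hpd hqd hrd h1 h2 h3
end

section
/- Let K be a normal elementary abelian subgroup of a finite group G and let L = G/K. Form the natural semidirect product G₁ = K ⋊ L, where L acts on K via the conjugation action induced from G. Then every element order of G₁ is an element order of G, i.e., ω(G₁) ⊆ ω(G). -/
private lemma aux_order {H : Type*} [Group H] [Finite H] (y : H) (n : ℕ)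
    (hn : n ∣ orderOf y) : orderOf y = n * orderOf (y ^ n) := by
  rw [orderOf_pow, Nat.gcd_eq_right hn, Nat.mul_div_cancel' hn]

/-- If `K` is a normal elementary abelian subgroup of a finite group `G` and
`G₁ = K ⋊ (G/K)` is the natural semidirect product (the action of `G/K` on `K` being
induced by conjugation in `G`), then `ω(G₁) ⊆ ω(G)`. -/
theorem stmt_3 {G : Type*} [Group G] [Fintype G] (K : Subgroup G) [K.Normal]
    (p : ℕ) (hp : p.Prime)
    (hcomm : ∀ x y : K, x * y = y * x) (hexp : ∀ x : K, x ^ p = 1)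
    (φ : G ⧸ K →* MulAut K)
    (hφ : ∀ (g : G) (k : K), ((φ (QuotientGroup.mk g) k : K) : G) = g * (k : G) * g⁻¹) :
    ∀ x : K ⋊[φ] (G ⧸ K), ∃ y : G, orderOf y = orderOf x := by
  have hfin : Finite (K ⋊[φ] (G ⧸ K)) :=
    Finite.of_injective (fun z : K ⋊[φ] (G ⧸ K) => (z.left, z.right))
      (fun a b h => by
        simp only [Prod.mk.injEq] at h
        ext <;> simp [h.1, h.2])
  intro x
  obtain ⟨g, hg⟩ := QuotientGroup.mk_surjective x.right
  set a : K := x.left with ha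
  set n : ℕ := orderOf x.right with hn
  have hrpow : ∀ m : ℕ, (x ^ m).right = x.right ^ m := by
    intro m
    induction m with
    | zero => simp
    | succ m ih2 => rw [pow_succ, SemidirectProduct.mul_right, ih2, pow_succ]
  -- key power formula
  have key : ∀ m : ℕ, (((x ^ m).left : K) : G) * g ^ m = ((a : G) * g) ^ m := by
    intro m
    induction m with
    | zero => simp
    | succ m ih =>
      have hqm : (x ^ m).right = QuotientGroup.mk (g ^ m) := by
        rw [hrpow, ← hg, QuotientGroup.mk_pow]
      rw [pow_succ x, SemidirectProduct.mul_left, Submonoid.coe_mul, hqm, hφ]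
      rw [pow_succ ((a:G) * g), ← ih]
      group
      rw [← ha]
  have hxnr : (x ^ n).right = 1 := by rw [hrpow, pow_orderOf_eq_one]
  set b : K := (x ^ n).left with hb
  have hxn : x ^ n = SemidirectProduct.inl b := by
    ext <;> simp [hxnr, hb.symm]
  -- order of x
  have hndx : n ∣ orderOf x := by
    have := orderOf_map_dvd (SemidirectProduct.rightHom) x
    simpa [SemidirectProduct.rightHom] using this
  have hox : orderOf x = n * orderOf b := by
    rw [aux_order x n hndx, hxn, orderOf_injective _ SemidirectProduct.inl_injective]
  -- g^n ∈ K
  have hgnK : g ^ n ∈ K := by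
    rw [← QuotientGroup.eq_one_iff, QuotientGroup.mk_pow, hg, pow_orderOf_eq_one]
  -- any element of K has order dividing p
  have hordK : ∀ k : K, orderOf (k : G) ∣ p := by
    intro k
    apply orderOf_dvd_of_pow_eq_one
    have := hexp k
    have := congrArg (Subtype.val) this
    simpa using this
  have hordK' : ∀ k : K, (k : G) ≠ 1 → orderOf (k : G) = p := by
    intro k hk
    exact ((Nat.dvd_prime hp).mp (hordK k)).resolve_left (by
      intro h1
      exact hk (orderOf_eq_one_iff.mp h1))
  -- order of g
  have hndg : n ∣ orderOf g := by
    have := orderOf_map_dvd (QuotientGroup.mk' K) g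
    simpa [hg] using this
  have hog : orderOf g = n * orderOf (g ^ n) := aux_order g n hndg
  have hgn_dvd : orderOf (g ^ n) ∣ p := hordK ⟨g ^ n, hgnK⟩
  by_cases hbone : b = 1
  · -- orderOf x = n
    have hx_eq : orderOf x = n := by rw [hox, hbone, orderOf_one, mul_one]
    by_cases hgn : g ^ n = 1
    · exact ⟨g, by rw [hog, hgn, orderOf_one, mul_one, hx_eq]⟩
    · have hogp : orderOf g = n * p := by
        rw [hog, hordK' ⟨g ^ n, hgnK⟩ hgn]
      refine ⟨g ^ p, ?_⟩
      rw [orderOf_pow, hogp, hx_eq, Nat.gcd_eq_right ⟨n, mul_comm n p⟩,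
        Nat.mul_div_cancel _ hp.pos]
  · -- orderOf x = n * p
    have hbp : orderOf b = p := by
      rw [← orderOf_submonoid b]
      exact hordK' b (by simpa using fun h => hbone (Subtype.ext h))
    have hx_eq : orderOf x = n * p := by rw [hox, hbp]
    by_cases hgn : g ^ n = 1
    · -- use y = a * g
      refine ⟨(a : G) * g, ?_⟩
      have hyn : ((a : G) * g) ^ n = (b : G) := by
        rw [← key n, hgn, mul_one]
      have hmk : (((a : G) * g : G) : G ⧸ K) = x.right := by
        rw [QuotientGroup.mk_mul, (QuotientGroup.eq_one_iff _).mpr a.2, one_mul, hg]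
      have hndy : n ∣ orderOf ((a : G) * g) := by
        have := orderOf_map_dvd (QuotientGroup.mk' K) ((a : G) * g)
        simpa [hmk] using this
      rw [aux_order _ n hndy, hyn, orderOf_submonoid, hbp, hx_eq]
    · refine ⟨g, ?_⟩
      rw [hog, hordK' ⟨g ^ n, hgnK⟩ hgn, hx_eq]
end

section
/- Let G = P ⋊ (R₁ × ⋯ × R_k) be a finite group, where P is a nontrivial p-group, each R_i is an elementary abelian group of order r_i², and p, r₁, …, r_k are pairwise distinct primes. Then G contains an element of order p·r₁·⋯·r_k. -/
set_option maxHeartbeats 1000000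

instance addAutMulGroupOld {A : Type*} [Add A] : Group (AddAut A) where
  mul g h := AddEquiv.trans h g
  one := AddEquiv.refl _
  inv := AddEquiv.symm
  mul_assoc _ _ _ := rfl
  one_mul _ := rfl
  mul_one _ := rfl
  inv_mul_cancel := AddEquiv.self_trans_symm


open Finset in
lemma key_lemma {k : ℕ} (p : ℕ) (r : Fin k → ℕ) (hp : p.Prime) (hr : ∀ i, (r i).Prime)
    (R : Fin k → Type*) [∀ i, CommGroup (R i)] [∀ i, Fintype (R i)]
    (hcard : ∀ i, Fintype.card (R i) = (r i) ^ 2)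
    (hexp : ∀ i (x : R i), x ^ (r i) = 1)
    (V : Type*) [AddCommGroup V] [Finite V] [Nontrivial V] (hV : ∀ v : V, p • v = 0)
    (ψ : (∀ i, R i) →* AddAut V) :
    ∃ (b : ∀ i, R i) (v : V), (∀ i, orderOf (b i) = r i) ∧ v ≠ 0 ∧ ψ b v = v := by
  classical
  haveI : NeZero p := ⟨hp.ne_zero⟩
  haveI : Module (ZMod p) V := AddCommGroup.zmodModule hV
  -- the linear map associated to the action of `a`
  let L : (∀ i, R i) → (V →ₗ[ZMod p] V) := fun a => ((ψ a).toAddMonoidHom).toZModLinearMap p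
  have hLapp : ∀ a v, ⇑(L a) v = ψ a v := fun a v => rfl
  -- invariant nonzero submodules
  let S : Set (Submodule (ZMod p) V) := {W | W ≠ ⊥ ∧ ∀ a, ∀ v ∈ W, ψ a v ∈ W}
  have hStop : (⊤ : Submodule (ZMod p) V) ∈ S :=
    ⟨fun h => by
      obtain ⟨x, hx⟩ := exists_ne (0 : V)
      exact hx ((Submodule.mem_bot _).mp (h ▸ Submodule.mem_top)), fun a v _ => Submodule.mem_top⟩
  obtain ⟨W, hWS, hWmin⟩ : ∃ W ∈ S, ∀ W' ∈ S, id W' ≤ id W → id W = id W' := by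
    obtain ⟨W, hW⟩ := (Set.toFinite S).exists_minimal ⟨⊤, hStop⟩
    exact ⟨W, hW.1, fun W' h hle => le_antisymm (hW.2 h hle) hle⟩
  obtain ⟨hWbot, hWinv⟩ := hWS
  have hWmin' : ∀ W' ∈ S, W' ≤ W → W' = W := fun W' h hle => (hWmin W' h hle).symm
  -- restricted action on W
  let ρ : (∀ i, R i) → Module.End (ZMod p) ↥W := fun a => (L a).restrict (fun x hx => hWinv a x hx)
  have hρapp : ∀ a (x : ↥W), ((ρ a x : ↥W) : V) = ψ a x := fun a x => rfl
  have hρmul : ∀ a b, ρ (a * b) = ρ a * ρ b := by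
    intro a b
    ext x
    simp only [Module.End.mul_apply, hρapp, map_mul]
    rfl
  have hρone : ρ 1 = 1 := by
    ext x
    simp only [hρapp, map_one]
    rfl
  -- the commutative subalgebra generated by the action
  have hcomm : ∀ x ∈ Set.range ρ, ∀ y ∈ Set.range ρ, x * y = y * x := by
    rintro _ ⟨a, rfl⟩ _ ⟨b, rfl⟩
    rw [← hρmul, ← hρmul, mul_comm]
  let E := Algebra.adjoin (ZMod p) (Set.range ρ)
  letI : CommRing E := Algebra.adjoinCommRingOfComm (ZMod p) hcomm
  obtain ⟨w₀, hw₀W, hw₀⟩ := (Submodule.ne_bot_iff W).mp hWbot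
  haveI : Nontrivial E := by
    refine ⟨0, 1, fun h01 => hw₀ ?_⟩
    have := congrArg (fun e : E => (e : Module.End (ZMod p) ↥W) ⟨w₀, hw₀W⟩) h01
    simpa using congrArg Subtype.val this.symm
  -- every nonzero element of E is injective on W
  have hinj : ∀ e : E, (e : Module.End (ZMod p) ↥W) ≠ 0 →
      Function.Injective (e : Module.End (ZMod p) ↥W) := by
    intro e he
    rw [← LinearMap.ker_eq_bot]
    by_contra hker
    -- the kernel pushed to V is invariant and nonzero
    set K : Submodule (ZMod p) V :=
      (LinearMap.ker (e : Module.End (ZMod p) ↥W)).map W.subtype with hK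
    have hKle : K ≤ W := Submodule.map_subtype_le _ _
    have hKS : K ∈ S := by
      constructor
      · intro h0
        apply hker
        rw [Submodule.eq_bot_iff] at h0 ⊢
        intro x hx
        have : (x : V) ∈ K := ⟨x, hx, rfl⟩
        exact Subtype.ext (h0 _ this)
      · rintro a _ ⟨x, hx, rfl⟩
        refine ⟨ρ a x, ?_, (hρapp a x).symm⟩
        have hcomm2 : (e : Module.End (ZMod p) ↥W) * ρ a = ρ a * (e : Module.End (ZMod p) ↥W) := by
          have : e * ⟨ρ a, Algebra.subset_adjoin ⟨a, rfl⟩⟩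
              = (⟨ρ a, Algebra.subset_adjoin ⟨a, rfl⟩⟩ : E) * e := mul_comm _ _
          exact congrArg Subtype.val this
        have : (e : Module.End (ZMod p) ↥W) (ρ a x) = ρ a ((e : Module.End (ZMod p) ↥W) x) :=
          congrArg (fun f : Module.End (ZMod p) ↥W => f x) hcomm2
        simp only [SetLike.mem_coe, LinearMap.mem_ker] at hx ⊢
        rw [this, hx, map_zero]
    have hKW : K = W := hWmin' K hKS hKle
    apply he
    ext x
    have hxK : (x : V) ∈ K := hKW.symm ▸ x.2
    obtain ⟨y, hy, hyx⟩ := hxK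
    have : y = x := Subtype.ext hyx
    rw [← this]
    simpa using hy
  haveI : NoZeroDivisors E := by
    constructor
    intro a b hab
    by_cases ha : (a : Module.End (ZMod p) ↥W) = 0
    · exact Or.inl (Subtype.ext ha)
    · refine Or.inr (Subtype.ext (LinearMap.ext fun x => hinj a ha ?_))
      have h : ((a * b : E) : Module.End (ZMod p) ↥W) x = 0 := by rw [hab]; rfl
      simpa [Module.End.mul_apply, LinearMap.zero_apply, map_zero] using h
  haveI : IsDomain E := NoZeroDivisors.to_isDomain _
  -- the monoid hom into E
  let f : (∀ i, R i) →* E :=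
    { toFun := fun a => ⟨ρ a, Algebra.subset_adjoin ⟨a, rfl⟩⟩
      map_one' := Subtype.ext hρone
      map_mul' := fun a b => Subtype.ext (hρmul a b) }
  -- for each i, find an element of order r i in the kernel
  have H : ∀ i, ∃ c : R i, orderOf c = r i ∧ f (MonoidHom.mulSingle R i c) = 1 := by
    intro i
    haveI : Fact (r i).Prime := ⟨hr i⟩
    set g : R i →* E := f.comp (MonoidHom.mulSingle R i) with hg
    have hni : ¬ Function.Injective g := by
      intro hinj'
      haveI := isCyclic_of_subgroup_isDomain g hinj'
      obtain ⟨x, hx⟩ := IsCyclic.exists_generator (α := R i)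
      have h1 : orderOf x = Nat.card (R i) := orderOf_eq_card_of_forall_mem_zpowers hx
      have h2 : orderOf x ∣ r i := orderOf_dvd_of_pow_eq_one (hexp i x)
      rw [h1, Nat.card_eq_fintype_card, hcard i] at h2
      have := Nat.le_of_dvd (hr i).pos h2
      nlinarith [(hr i).two_le]
    rw [Function.not_injective_iff] at hni
    obtain ⟨x, y, hxy, hne⟩ := hni
    refine ⟨x * y⁻¹, ?_, ?_⟩
    · exact orderOf_eq_prime (hexp i _) (by simpa [mul_inv_eq_one] using hne)
    · show g (x * y⁻¹) = 1
      have hyu : g y * g y⁻¹ = 1 := by rw [← map_mul, mul_inv_cancel, map_one]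
      have h1 : g (x * y⁻¹) = g x * g y⁻¹ := map_mul g x y⁻¹
      rw [hxy] at h1
      rw [h1, hyu]
  choose b hb1 hb2 using H
  have hfb : f b = 1 := by
    have hb : b = ∏ i, Pi.mulSingle i (b i) := (Finset.univ_prod_mulSingle b).symm
    rw [hb, map_prod]
    refine Finset.prod_eq_one (fun i _ => ?_)
    exact hb2 i
  refine ⟨b, w₀, hb1, hw₀, ?_⟩
  have : ρ b = 1 := congrArg Subtype.val hfb
  have := congrArg (fun f : Module.End (ZMod p) ↥W => ((f ⟨w₀, hw₀W⟩ : ↥W) : V)) this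
  simpa [hρapp] using this


lemma sdp_pow {P A : Type*} [Group P] [Group A] (φ : A →* MulAut P) {v : P} {b : A}
    (h : φ b v = v) (n : ℕ) : (⟨v, b⟩ : P ⋊[φ] A) ^ n = ⟨v ^ n, b ^ n⟩ := by
  induction n with
  | zero => rw [pow_zero, pow_zero, pow_zero]; rfl
  | succ n ih =>
    rw [pow_succ', ih]
    refine SemidirectProduct.ext ?_ ?_
    · show v * φ b (v ^ n) = v ^ (n + 1)
      rw [map_pow, h, ← pow_succ']
    · show b * b ^ n = b ^ (n + 1)
      rw [← pow_succ']

/-- If `G = P ⋊ (R₁ × ⋯ × R_k)` where `P` is a nontrivial `p`-group and each `Rᵢ` is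
elementary abelian of order `rᵢ²`, the primes `p, r₁, …, r_k` being pairwise distinct,
then `G` has an element of order `p·r₁⋯r_k`. -/
theorem stmt_4 {k : ℕ} (p : ℕ) (r : Fin k → ℕ) (hp : p.Prime) (hr : ∀ i, (r i).Prime)
    (hdist : ∀ i j, i ≠ j → r i ≠ r j) (hpr : ∀ i, p ≠ r i)
    (P : Type*) [Group P] [Finite P] [Nontrivial P] (hP : IsPGroup p P)
    (R : Fin k → Type*) [∀ i, CommGroup (R i)] [∀ i, Fintype (R i)]
    (hcard : ∀ i, Fintype.card (R i) = (r i) ^ 2)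
    (hexp : ∀ i (x : R i), x ^ (r i) = 1)
    (φ : (∀ i, R i) →* MulAut P) :
    ∃ x : P ⋊[φ] (∀ i, R i), orderOf x = p * ∏ i, r i := by
  classical
  haveI : Fact p.Prime := ⟨hp⟩
  -- the subgroup of central elements of order dividing p
  let Ω : Subgroup P :=
  { carrier := {x | x ∈ Subgroup.center P ∧ x ^ p = 1}
    one_mem' := ⟨Subgroup.one_mem _, one_pow p⟩
    mul_mem' := by
      rintro a b ⟨hac, hap⟩ ⟨hbc, hbp⟩
      refine ⟨Subgroup.mul_mem _ hac hbc, ?_⟩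
      have hcomm : Commute a b := ((Subgroup.mem_center_iff.mp hac) b).symm
      rw [hcomm.mul_pow, hap, hbp, one_mul]
    inv_mem' := by
      rintro a ⟨hac, hap⟩
      exact ⟨Subgroup.inv_mem _ hac, by rw [inv_pow, hap, inv_one]⟩ }
  have hΩmem : ∀ x : P, x ∈ Ω ↔ x ∈ Subgroup.center P ∧ x ^ p = 1 := fun x => Iff.rfl
  have hΩc : ∀ x : P, x ∈ Ω → x ∈ Subgroup.center P := fun x hx => ((hΩmem x).mp hx).1
  have hΩp : ∀ x : P, x ∈ Ω → x ^ p = 1 := fun x hx => ((hΩmem x).mp hx).2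
  -- Ω contains an element ≠ 1
  haveI := hP.center_nontrivial
  obtain ⟨g', hg'⟩ := exists_ne (1 : Subgroup.center P)
  have hg1 : (g' : P) ≠ 1 := fun h => hg' (Subtype.ext h)
  obtain ⟨k0, hk0⟩ := hP (g' : P)
  obtain ⟨m, hmle, horder⟩ := (Nat.dvd_prime_pow hp).mp (orderOf_dvd_of_pow_eq_one hk0)
  have hm0 : m ≠ 0 := by
    rintro rfl
    rw [pow_zero, orderOf_eq_one_iff] at horder
    exact hg1 horder
  set h : P := (g' : P) ^ p ^ (m - 1) with hh
  have hhp : h ^ p = 1 := by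
    rw [hh, ← pow_mul, ← pow_succ, Nat.sub_add_cancel (Nat.one_le_iff_ne_zero.mpr hm0),
      ← horder, pow_orderOf_eq_one]
  have hh1 : h ≠ 1 := by
    intro h1
    have := orderOf_dvd_of_pow_eq_one h1
    rw [horder] at this
    have := (Nat.pow_dvd_pow_iff_le_right hp.one_lt).mp this
    omega
  have hhΩ : h ∈ Ω := ⟨Subgroup.pow_mem _ g'.2 _, hhp⟩
  -- Ω is commutative
  letI : CommGroup ↥Ω :=
  { (inferInstance : Group ↥Ω) with
    mul_comm := fun a b =>
      Subtype.ext ((Subgroup.mem_center_iff.mp (hΩc _ a.2) (b : P)).symm) }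
  haveI : Nontrivial ↥Ω := ⟨⟨⟨h, hhΩ⟩, 1, fun e => hh1 (congrArg Subtype.val e)⟩⟩
  have hV : ∀ v : Additive ↥Ω, p • v = 0 := by
    intro v
    have h1 : (Additive.toMul v : ↥Ω) ^ p = 1 :=
      Subtype.ext (by
        have := hΩp _ (Additive.toMul v).2
        simpa using this)
    rw [← ofMul_toMul v, ← ofMul_pow, h1, ofMul_one]
  -- the action preserves Ω
  have hpres : ∀ (a) (x : P), x ∈ Ω → φ a x ∈ Ω := by
    rintro a x ⟨hxc, hxp⟩
    refine ⟨Subgroup.mem_center_iff.mpr fun g => ?_, by rw [← map_pow, hxp, map_one]⟩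
    conv_lhs => rw [← MulEquiv.apply_symm_apply (φ a) g]
    rw [← map_mul, Subgroup.mem_center_iff.mp hxc ((φ a).symm g), map_mul,
      MulEquiv.apply_symm_apply]
  -- the restricted action as mul-equivs of Ω
  let u : (∀ i, R i) → (↥Ω ≃* ↥Ω) := fun a =>
  { toFun := fun x => ⟨φ a x, hpres a x x.2⟩
    invFun := fun x => ⟨φ a⁻¹ x, hpres a⁻¹ x x.2⟩
    left_inv := fun x => Subtype.ext (by
      show φ a⁻¹ (φ a (x : P)) = (x : P)
      rw [← MulAut.mul_apply, ← map_mul, inv_mul_cancel, map_one, MulAut.one_apply])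
    right_inv := fun x => Subtype.ext (by
      show φ a (φ a⁻¹ (x : P)) = (x : P)
      rw [← MulAut.mul_apply, ← map_mul, mul_inv_cancel, map_one, MulAut.one_apply])
    map_mul' := fun x y => Subtype.ext (map_mul (φ a) (x : P) (y : P)) }
  let ψ : (∀ i, R i) →* AddAut (Additive ↥Ω) :=
  { toFun := fun a => MulEquiv.toAdditive (u a)
    map_one' := by
      refine AddEquiv.ext fun v => ?_
      apply Additive.toMul.injective
      apply Subtype.ext
      show φ 1 ((Additive.toMul v : ↥Ω) : P) = ((Additive.toMul v : ↥Ω) : P)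
      rw [map_one, MulAut.one_apply]
    map_mul' := fun a b => by
      refine AddEquiv.ext fun v => ?_
      apply Additive.toMul.injective
      apply Subtype.ext
      show φ (a * b) ((Additive.toMul v : ↥Ω) : P)
          = φ a (φ b ((Additive.toMul v : ↥Ω) : P))
      rw [map_mul, MulAut.mul_apply] }
  obtain ⟨b, v, hb, hv0, hbv⟩ :=
    key_lemma p r hp hr R hcard hexp (Additive ↥Ω) hV ψ
  set w : ↥Ω := Additive.toMul v with hwdef
  have hw1 : (w : P) ≠ 1 := by
    intro h1
    apply hv0
    have hw : w = 1 := Subtype.ext h1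
    rw [← ofMul_toMul v, ← hwdef, hw, ofMul_one]
  have hfix : φ b (w : P) = (w : P) := by
    have h2 : u b w = w := congrArg Additive.toMul hbv
    exact congrArg Subtype.val h2
  refine ⟨⟨(w : P), b⟩, ?_⟩
  have hpow := sdp_pow φ hfix
  -- upper bound
  have hM1 : (⟨(w : P), b⟩ : P ⋊[φ] (∀ i, R i)) ^ (p * ∏ i, r i) = 1 := by
    rw [hpow]
    refine SemidirectProduct.ext ?_ ?_
    · show (w : P) ^ (p * ∏ i, r i) = 1
      rw [pow_mul, hΩp _ w.2, one_pow]
    · show b ^ (p * ∏ i, r i) = 1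
      funext i
      have hdvd : orderOf (b i) ∣ p * ∏ i, r i := by
        rw [hb i]
        exact dvd_mul_of_dvd_right (Finset.dvd_prod_of_mem r (Finset.mem_univ i)) p
      have := orderOf_dvd_iff_pow_eq_one.mp hdvd
      simpa using this
  have hdvd1 : orderOf (⟨(w : P), b⟩ : P ⋊[φ] (∀ i, R i)) ∣ p * ∏ i, r i :=
    orderOf_dvd_of_pow_eq_one hM1
  -- lower bound
  set N := orderOf (⟨(w : P), b⟩ : P ⋊[φ] (∀ i, R i)) with hN
  have hN1 : (⟨(w : P), b⟩ : P ⋊[φ] (∀ i, R i)) ^ N = 1 := pow_orderOf_eq_one _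
  rw [hpow] at hN1
  have hleft : (w : P) ^ N = 1 := by
    have := congrArg SemidirectProduct.left hN1
    simpa using this
  have hright : b ^ N = 1 := by
    have := congrArg SemidirectProduct.right hN1
    simpa using this
  have hpord : orderOf (w : P) = p := orderOf_eq_prime (hΩp _ w.2) hw1
  have hpdvd : p ∣ N := hpord ▸ orderOf_dvd_of_pow_eq_one hleft
  have hrdvd : ∀ i, r i ∣ N := fun i => by
    have hbi : (b i) ^ N = 1 := by
      have := congrArg (fun f => f i) hright
      simpa using this
    exact hb i ▸ orderOf_dvd_of_pow_eq_one hbi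
  have hrinj : Function.Injective r := fun i j hij =>
    by_contra fun hne => hdist i j hne hij
  have hprod : (∏ i, r i) ∣ N := by
    have himg : ∏ q ∈ Finset.univ.image r, q = ∏ i, r i :=
      Finset.prod_image (fun x _ y _ hxy => hrinj hxy)
    rw [← himg]
    refine Finset.prod_primes_dvd N (fun q hq => ?_) (fun q hq => ?_)
    · obtain ⟨i, _, rfl⟩ := Finset.mem_image.mp hq
      exact (hr i).prime
    · obtain ⟨i, _, rfl⟩ := Finset.mem_image.mp hq
      exact hrdvd i
  have hcop : Nat.Coprime p (∏ i, r i) :=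
    Nat.Coprime.prod_right fun i _ => (Nat.coprime_primes hp (hr i)).mpr (hpr i)
  exact Nat.dvd_antisymm hdvd1 (hcop.mul_dvd_of_dvd_of_dvd hpdvd hprod)
end

section
/- Let q = 2^α with α odd, α ≥ 3, and suppose β is an odd positive integer such that 2^β − 1 divides 4(2^{4α} − 1) and 2^{2β} + 1 divides 4(2^{4α} − 1). Then β divides α. -/
/-- If `α ≥ 3` is odd, `β` is odd and positive, and both `2^β − 1` and `2^{2β} + 1`
divide `4(2^{4α} − 1)`, then `β` divides `α`. -/
theorem stmt_13 (α β : ℕ) (hα : 3 ≤ α) (hαodd : Odd α) (hβodd : Odd β) (hβpos : 0 < β)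
    (h1 : 2 ^ β - 1 ∣ 4 * (2 ^ (4 * α) - 1))
    (h2 : 2 ^ (2 * β) + 1 ∣ 4 * (2 ^ (4 * α) - 1)) :
    β ∣ α := by
  set N : ℕ := 2 ^ (2 * β) + 1 with hN
  have hNodd : Odd N := by
    refine Even.add_one ?_
    exact (Nat.even_pow' (by positivity)).mpr even_two
  have hcop : Nat.Coprime N 4 := by
    have h2 : Nat.Coprime N 2 := hNodd.coprime_two_right
    have : Nat.Coprime N (2 * 2) := h2.mul_right h2
    simpa [show (4:ℕ) = 2 * 2 by norm_num] using this
  have h2' : N ∣ 2 ^ (4 * α) - 1 := (Nat.Coprime.dvd_of_dvd_mul_left hcop h2)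
  have hNdvdβ : N ∣ 2 ^ (4 * β) - 1 := by
    have : 2 ^ (4 * β) - 1 = (2 ^ (2 * β) + 1) * (2 ^ (2 * β) - 1) := by
      have hsq := Nat.sq_sub_sq (2 ^ (2 * β)) 1
      simp only [one_pow] at hsq
      rw [← hsq, ← pow_mul]
      ring_nf
    rw [this]; exact Dvd.intro _ rfl
  -- pass to ZMod N
  have hNpos : 1 < N := by
    have : 1 ≤ 2 ^ (2 * β) := Nat.one_le_two_pow
    omega
  have key : ∀ m : ℕ, N ∣ 2 ^ m - 1 → (2 : ZMod N) ^ m = 1 := by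
    intro m hm
    have h1le : 1 ≤ 2 ^ m := Nat.one_le_two_pow
    have hcast : ((2 ^ m - 1 : ℕ) : ZMod N) = 0 := (ZMod.natCast_eq_zero_iff _ _).mpr hm
    rw [Nat.cast_sub h1le] at hcast
    push_cast at hcast
    linear_combination hcast
  have hgcd : (2 : ZMod N) ^ Nat.gcd (4 * β) (4 * α) = 1 :=
    pow_gcd_eq_one.mpr ⟨key _ hNdvdβ, key _ h2'⟩
  set d : ℕ := Nat.gcd β α with hd
  have hgd : Nat.gcd (4 * β) (4 * α) = 4 * d := Nat.gcd_mul_left 4 β α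
  rw [hgd] at hgcd
  have hback : N ∣ 2 ^ (4 * d) - 1 := by
    have h1le : 1 ≤ 2 ^ (4 * d) := Nat.one_le_two_pow
    rw [← ZMod.natCast_eq_zero_iff, Nat.cast_sub h1le]
    push_cast
    linear_combination hgcd
  have hle : N ≤ 2 ^ (4 * d) - 1 := by
    refine Nat.le_of_dvd ?_ hback
    have hdpos : 0 < d := Nat.gcd_pos_of_pos_left _ hβpos
    have : (2:ℕ) ^ 1 ≤ 2 ^ (4 * d) := Nat.pow_le_pow_right (by norm_num) (by omega)
    omega
  have hβlt : 2 * β < 4 * d := by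
    by_contra hcon
    push_neg at hcon
    have : (2:ℕ) ^ (4 * d) ≤ 2 ^ (2 * β) := Nat.pow_le_pow_right (by norm_num) hcon
    omega
  have hdβ : d ∣ β := Nat.gcd_dvd_left _ _
  obtain ⟨k, hk⟩ := hdβ
  have hdpos : 0 < d := Nat.gcd_pos_of_pos_left _ hβpos
  have hklt : d * k < d * 2 := by omega
  have hk2 : k < 2 := Nat.lt_of_mul_lt_mul_left hklt
  have hk0 : k ≠ 0 := by rintro rfl; simp at hk; omega
  have : β = d := by rw [hk]; interval_cases k <;> omega
  rw [this]
  exact Nat.gcd_dvd_right _ _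
end
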